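/- arXiv:2012.09726 — 2 statements merged into one kernel-verified Lean document; each statement's English description precedes it below -/
import Mathlib

section
/- For real numbers c₀ and c₁ > 0 and w₀ ∈ ℝ, ∫_{-∞}^{w₀} Φ(c₀ - c₁ w) φ(w) dw = BvN(c₀/√(1+c₁²), w₀; c₁/√(1+c₁²)), where BvN(h,k;ρ) is the bivariate normal CDF with correlation ρ. -/
open MeasureTheory Real

/-- The standard normal cumulative distribution function. -/
noncomputable def stdNormalCDF (x : ℝ) : ℝ :=
  ∫ t in Set.Iic x, Real.exp (-t ^ 2 / 2) / Real.sqrt (2 * Real.pi)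

/-- The standard normal density. -/
noncomputable def stdNormalPDF (w : ℝ) : ℝ :=
  Real.exp (-w ^ 2 / 2) / Real.sqrt (2 * Real.pi)

/-- The bivariate normal CDF with correlation `ρ`. -/
noncomputable def BvN (h k ρ : ℝ) : ℝ :=
  (1 / (2 * Real.pi * Real.sqrt (1 - ρ ^ 2))) *
    ∫ y in Set.Iic k, ∫ x in Set.Iic h,
      Real.exp (-(x ^ 2 - 2 * ρ * x * y + y ^ 2) / (2 * (1 - ρ ^ 2)))

/-! Completing the square, `x² - 2ρxy + y² = (x - ρy)² + (1 - ρ²) y²`, and substituting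
`t = (x - ρy) / √(1 - ρ²)` turn the inner integral of `BvN h k ρ` into `√(1 - ρ²) e^{-y²/2}`
times an unnormalised `Φ((h - ρy) / √(1 - ρ²))`, so that
`BvN h k ρ = ∫_{-∞}^k Φ((h - ρy) / √(1 - ρ²)) φ(y) dy`. For `ρ = c₁ / √(1 + c₁²)` one has
`√(1 - ρ²) = 1 / √(1 + c₁²)`, and the argument of `Φ` becomes `c₀ - c₁ y`. Substitution and
pulling out constants hold for the Bochner integral unconditionally, so no integrability
argument is needed. -/

theorem integral_Iic_comp_sub_div {E : Type*} [NormedAddCommGroup E] [NormedSpace ℝ E]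
    (g : ℝ → E) {σ : ℝ} (hσ : 0 < σ) (c h : ℝ) :
    ∫ x in Set.Iic h, g ((x - c) / σ) = σ • ∫ t in Set.Iic ((h - c) / σ), g t := by
  have hindicator : ∀ x, (Set.Iic h).indicator (fun x => g ((x - c) / σ)) x
      = (Set.Iic ((h - c) / σ)).indicator g (σ⁻¹ * (x - c)) := by
    intro x
    simp only [Set.indicator, Set.mem_Iic, inv_mul_eq_div,
      div_le_div_iff_of_pos_right hσ, sub_le_sub_iff_right]
  rw [← integral_indicator measurableSet_Iic, ← integral_indicator measurableSet_Iic,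
    funext hindicator,
    integral_sub_right_eq_self fun y => (Set.Iic ((h - c) / σ)).indicator g (σ⁻¹ * y),
    Measure.integral_comp_inv_mul_left, abs_of_pos hσ]

theorem stdNormalCDF_mul_stdNormalPDF (u y : ℝ) :
    stdNormalCDF u * stdNormalPDF y
      = (2 * π)⁻¹ * (exp (-y ^ 2 / 2) * ∫ t in Set.Iic u, exp (-t ^ 2 / 2)) := by
  have h2π : √(2 * π) * √(2 * π) = 2 * π := mul_self_sqrt (by positivity)
  rw [stdNormalCDF, stdNormalPDF, integral_div, div_mul_div_comm, h2π]
  ring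

theorem integral_Iic_exp_bvn_exponent {ρ : ℝ} (hρ : ρ ^ 2 < 1) (h y : ℝ) :
    ∫ x in Set.Iic h, exp (-(x ^ 2 - 2 * ρ * x * y + y ^ 2) / (2 * (1 - ρ ^ 2)))
      = √(1 - ρ ^ 2) * (exp (-y ^ 2 / 2) *
          ∫ t in Set.Iic ((h - ρ * y) / √(1 - ρ ^ 2)), exp (-t ^ 2 / 2)) := by
  set σ := √(1 - ρ ^ 2)
  have hσ : 0 < σ := sqrt_pos.mpr (by linarith)
  have hσ2 : σ ^ 2 = 1 - ρ ^ 2 := sq_sqrt (by linarith)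
  have hsplit : ∀ x, exp (-(x ^ 2 - 2 * ρ * x * y + y ^ 2) / (2 * (1 - ρ ^ 2)))
      = exp (-y ^ 2 / 2) * exp (-((x - ρ * y) / σ) ^ 2 / 2) := by
    intro x
    rw [← exp_add, ← hσ2]
    congr 1
    field_simp
    linear_combination y ^ 2 * hσ2
  simp_rw [hsplit, integral_const_mul, integral_Iic_comp_sub_div (fun t => exp (-t ^ 2 / 2)) hσ,
    smul_eq_mul]
  ring

theorem BvN_eq_integral_stdNormalCDF_mul_stdNormalPDF {ρ : ℝ} (hρ : ρ ^ 2 < 1) (h k : ℝ) :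
    BvN h k ρ = ∫ y in Set.Iic k,
      stdNormalCDF ((h - ρ * y) / √(1 - ρ ^ 2)) * stdNormalPDF y := by
  have hσ : √(1 - ρ ^ 2) ≠ 0 := (sqrt_pos.mpr (by linarith)).ne'
  simp_rw [BvN, integral_Iic_exp_bvn_exponent hρ, stdNormalCDF_mul_stdNormalPDF,
    integral_const_mul, ← mul_assoc]
  congr 1
  field_simp

theorem integral_stdNormalCDF_affine_eq_BvN_general (c₀ c₁ w₀ : ℝ) :
    ∫ w in Set.Iic w₀, stdNormalCDF (c₀ - c₁ * w) * stdNormalPDF w =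
      BvN (c₀ / Real.sqrt (1 + c₁ ^ 2)) w₀ (c₁ / Real.sqrt (1 + c₁ ^ 2)) := by
  set s := √(1 + c₁ ^ 2)
  have hs : 0 < s := sqrt_pos.mpr (by positivity)
  have hs2 : s ^ 2 = 1 + c₁ ^ 2 := sq_sqrt (by positivity)
  have hρ : (c₁ / s) ^ 2 < 1 := by
    rw [div_pow, hs2, div_lt_one (by positivity)]
    linarith
  have hσ : √(1 - (c₁ / s) ^ 2) = s⁻¹ := by
    rw [div_pow, hs2, one_sub_div (by positivity), add_sub_cancel_right, one_div, sqrt_inv]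
  rw [BvN_eq_integral_stdNormalCDF_mul_stdNormalPDF hρ, hσ]
  refine setIntegral_congr_fun measurableSet_Iic fun w _ => ?_
  congr 2
  field_simp

/-- For `c₁ > 0`:
`∫_{-∞}^{w₀} Φ(c₀ - c₁ w) φ(w) dw = BvN(c₀/√(1+c₁²), w₀; c₁/√(1+c₁²))`. -/
theorem integral_stdNormalCDF_affine_eq_BvN (c₀ c₁ w₀ : ℝ) (hc₁ : 0 < c₁) :
    ∫ w in Set.Iic w₀, stdNormalCDF (c₀ - c₁ * w) * stdNormalPDF w =
      BvN (c₀ / Real.sqrt (1 + c₁ ^ 2)) w₀ (c₁ / Real.sqrt (1 + c₁ ^ 2)) :=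
  integral_stdNormalCDF_affine_eq_BvN_general c₀ c₁ w₀
end

section
/- Let W₁ ~ N(0,1), c₀ ∈ ℝ, c₁ > 0, a ∈ (0,1), and w₀ = (c₀ - Φ^{-1}(a))/c₁. Then E[(Φ(c₀ - c₁ W₁) - a)⁺] = BvN(c₀/√(1+c₁²), w₀; c₁/√(1+c₁²)) - a Φ(w₀). -/
open MeasureTheory ProbabilityTheory Real

/-!
On `w ≤ w₀` we have `c₀ - c₁ w ≥ q`, so monotonicity of `Φ` and `Φ(q) = a` make the positive
part vanish exactly for `w > w₀`: the expectation is `∫_{w ≤ w₀} φ(w) Φ(c₀ - c₁ w) dw - a Φ(w₀)`.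
Completing the square, `x² - 2ρxy + y² = (x - ρy)² + (1 - ρ²) y²`, turns the inner integral of
`BvN h k ρ` into `φ(y) Φ((h - ρy)/√(1 - ρ²))`; for `h = c₀/√(1+c₁²)`, `ρ = c₁/√(1+c₁²)` the
argument is `c₀ - c₁ y`.
-/

open Set

theorem posPart_sub_eq_indicator_Iic {F : ℝ → ℝ} (hF : Antitone F) (w₀ w : ℝ) :
    max (F w - F w₀) 0 = (Iic w₀).indicator (fun w => F w - F w₀) w := by
  by_cases hw : w ≤ w₀
  · rw [indicator_of_mem (mem_Iic.2 hw), max_eq_left (sub_nonneg.2 (hF hw))]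
  · rw [indicator_of_notMem (mt mem_Iic.1 hw),
      max_eq_right (sub_nonpos.2 (hF (not_le.1 hw).le))]

theorem setIntegral_Iic_affine {E : Type*} [NormedAddCommGroup E] [NormedSpace ℝ E]
    (g : ℝ → E) {σ : ℝ} (hσ : 0 < σ) (m c : ℝ) :
    ∫ x in Iic (σ * c + m), g x = σ • ∫ t in Iic c, g (σ * t + m) := by
  let e : ℝ ≃o ℝ := (OrderIso.mulLeft₀ σ hσ).trans (OrderIso.addRight m)
  have himage : (fun t => σ * t + m) '' Iic c = Iic (σ * c + m) := e.image_Iic c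
  have he : ∀ t ∈ Iic c, HasDerivWithinAt (fun t => σ * t + m) σ (Iic c) t := fun t _ => by
    simpa using (((hasDerivAt_id t).const_mul σ).add_const m).hasDerivWithinAt (s := Iic c)
  rw [← himage, integral_image_eq_integral_abs_deriv_smul measurableSet_Iic he
    (e.injective.injOn (s := Iic c)), abs_of_pos hσ, integral_smul]

theorem gaussianPDFReal_zero_one (x : ℝ) :
    gaussianPDFReal 0 1 x = exp (-x ^ 2 / 2) / √(2 * π) := by
  simp [gaussianPDFReal, div_eq_inv_mul]

theorem stdNormalCDF_eq_setIntegral (x : ℝ) :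
    stdNormalCDF x = ∫ t in Iic x, gaussianPDFReal 0 1 t := by
  simp only [stdNormalCDF, gaussianPDFReal_zero_one]

theorem stdNormalCDF_eq_cdf : stdNormalCDF = cdf (gaussianReal 0 1) := by
  ext x
  rw [cdf_eq_real, measureReal_def, gaussianReal_apply_eq_integral _ one_ne_zero,
    ENNReal.toReal_ofReal (setIntegral_nonneg measurableSet_Iic
      fun t _ => gaussianPDFReal_nonneg 0 1 t), stdNormalCDF_eq_setIntegral]

theorem monotone_stdNormalCDF : Monotone stdNormalCDF :=
  stdNormalCDF_eq_cdf ▸ (cdf (gaussianReal 0 1)).mono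

theorem abs_stdNormalCDF_le_one (x : ℝ) : |stdNormalCDF x| ≤ 1 := by
  rw [stdNormalCDF_eq_cdf, abs_of_nonneg (cdf_nonneg _ x)]
  exact cdf_le_one _ x

theorem integrable_gaussianPDFReal_mul_stdNormalCDF_comp {f : ℝ → ℝ} (hf : Measurable f) :
    Integrable fun y => gaussianPDFReal 0 1 y * stdNormalCDF (f y) :=
  (integrable_gaussianPDFReal 0 1).mul_bdd
    (monotone_stdNormalCDF.measurable.comp hf).aestronglyMeasurable
    (ae_of_all _ fun y => abs_stdNormalCDF_le_one (f y))

theorem BvN_eq_setIntegral_gaussianPDFReal_mul (h k : ℝ) {ρ : ℝ} (hρ : ρ ^ 2 < 1) :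
    BvN h k ρ =
      ∫ y in Iic k, gaussianPDFReal 0 1 y * stdNormalCDF ((h - ρ * y) / √(1 - ρ ^ 2)) := by
  rw [BvN, ← integral_const_mul]
  set σ := √(1 - ρ ^ 2)
  have hσ : 0 < σ := sqrt_pos.2 (by linarith)
  have hσ2 : σ ^ 2 = 1 - ρ ^ 2 := sq_sqrt (by linarith)
  refine setIntegral_congr_fun measurableSet_Iic fun y _ => ?_
  set c := (h - ρ * y) / σ
  have hc : σ * c + ρ * y = h := by rw [mul_div_cancel₀ _ hσ.ne']; ring
  have hexp : ∀ t, exp (-((σ * t + ρ * y) ^ 2 - 2 * ρ * (σ * t + ρ * y) * y + y ^ 2) /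
      (2 * (1 - ρ ^ 2))) = exp (-t ^ 2 / 2) * exp (-y ^ 2 / 2) := fun t => by
    rw [← exp_add, ← hσ2]
    congr 1
    field_simp
    linear_combination y ^ 2 * hσ2
  rw [← hc, setIntegral_Iic_affine _ hσ, smul_eq_mul]
  simp only [hexp, integral_mul_const, stdNormalCDF, integral_div, gaussianPDFReal_zero_one]
  have h2π : √(2 * π) ^ 2 = 2 * π := sq_sqrt (by positivity)
  field_simp
  rw [h2π]
  ring

theorem BvN_div_sqrt_one_add_sq (c₀ c₁ k : ℝ) :
    BvN (c₀ / √(1 + c₁ ^ 2)) k (c₁ / √(1 + c₁ ^ 2)) =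
      ∫ y in Iic k, gaussianPDFReal 0 1 y * stdNormalCDF (c₀ - c₁ * y) := by
  have hs : 0 < 1 + c₁ ^ 2 := by positivity
  have hρ : (c₁ / √(1 + c₁ ^ 2)) ^ 2 = c₁ ^ 2 / (1 + c₁ ^ 2) := by rw [div_pow, sq_sqrt hs.le]
  have hσ : √(1 - (c₁ / √(1 + c₁ ^ 2)) ^ 2) = (√(1 + c₁ ^ 2))⁻¹ := by
    rw [hρ, ← sqrt_inv]
    congr 1
    field_simp
    ring
  rw [BvN_eq_setIntegral_gaussianPDFReal_mul _ _ (by rw [hρ, div_lt_one hs]; linarith), hσ]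
  refine setIntegral_congr_fun measurableSet_Iic fun y _ => ?_
  congr 2
  field_simp

theorem call_on_loss_BvN_general (c₀ c₁ a q : ℝ) (hc₁ : 0 < c₁)
    (hq : stdNormalCDF q = a) :
    ∫ w, max (stdNormalCDF (c₀ - c₁ * w) - a) 0 ∂(gaussianReal 0 1) =
      BvN (c₀ / Real.sqrt (1 + c₁ ^ 2)) ((c₀ - q) / c₁) (c₁ / Real.sqrt (1 + c₁ ^ 2)) -
        a * stdNormalCDF ((c₀ - q) / c₁) := by
  set w₀ := (c₀ - q) / c₁
  set F : ℝ → ℝ := fun w => stdNormalCDF (c₀ - c₁ * w)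
  have hF : Antitone F := fun u v huv =>
    monotone_stdNormalCDF (sub_le_sub_left (mul_le_mul_of_nonneg_left huv hc₁.le) c₀)
  have hFw₀ : F w₀ = a := by
    simp only [F, w₀]
    rw [mul_div_cancel₀ _ hc₁.ne', sub_sub_cancel, hq]
  calc ∫ w, max (F w - a) 0 ∂(gaussianReal 0 1)
      = ∫ w, gaussianPDFReal 0 1 w * max (F w - F w₀) 0 := by
        simp only [integral_gaussianReal_eq_integral_smul one_ne_zero, hFw₀, smul_eq_mul]
    _ = ∫ w in Iic w₀, gaussianPDFReal 0 1 w * (F w - F w₀) := by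
        simp_rw [posPart_sub_eq_indicator_Iic hF w₀, ← indicator_mul_right]
        exact integral_indicator measurableSet_Iic
    _ = BvN (c₀ / √(1 + c₁ ^ 2)) w₀ (c₁ / √(1 + c₁ ^ 2)) - a * stdNormalCDF w₀ := by
        have hFint := integrable_gaussianPDFReal_mul_stdNormalCDF_comp
          (f := fun w => c₀ - c₁ * w) (by fun_prop)
        simp_rw [mul_sub]
        rw [integral_sub hFint.integrableOn
            ((integrable_gaussianPDFReal 0 1).integrableOn.mul_const _),
          integral_mul_const, ← stdNormalCDF_eq_setIntegral, BvN_div_sqrt_one_add_sq, hFw₀,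
          mul_comm]

/-- For `W₁ ~ N(0,1)`, `c₁ > 0`, `a ∈ (0,1)` and `w₀ = (c₀ - Φ⁻¹(a))/c₁`
(where `q = Φ⁻¹(a)` is characterised by `Φ(q) = a`),
`E[(Φ(c₀ - c₁ W₁) - a)⁺] = BvN(c₀/√(1+c₁²), w₀; c₁/√(1+c₁²)) - a Φ(w₀)`. -/
theorem call_on_loss_BvN (c₀ c₁ a q : ℝ) (hc₁ : 0 < c₁)
    (ha : 0 < a ∧ a < 1) (hq : stdNormalCDF q = a) :
    ∫ w, max (stdNormalCDF (c₀ - c₁ * w) - a) 0 ∂(gaussianReal 0 1) =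
      BvN (c₀ / Real.sqrt (1 + c₁ ^ 2)) ((c₀ - q) / c₁) (c₁ / Real.sqrt (1 + c₁ ^ 2)) -
        a * stdNormalCDF ((c₀ - q) / c₁) :=
  call_on_loss_BvN_general c₀ c₁ a q hc₁ hq
end
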